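/- arXiv:2202.10568 — 5 statements merged into one kernel-verified Lean document; each statement's English description precedes it below -/
import Mathlib

section
/- A semi-decomposition on a topological space is of characteristic 0 if and only if it is R-closed, i.e. the element closure relation R = { (x,y) : y ∈ closure(F(x)) } is a closed subset of X × X. -/
open Filter Topology

universe u

/-- The bilateral prolongation `D(x)`. -/
def Prolong {X : Type u} [TopologicalSpace X] (F : X → Set X) (x : X) : Set X :=
  { y | ∃ (ι : Type u) (l : Filter ι) (xa ya : ι → X), l.NeBot ∧
      (∀ a, ya a ∈ F (xa a)) ∧ Tendsto xa l (nhds x) ∧ Tendsto ya l (nhds y) }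

/-!
`D(x)` is the fibre over `x` of the closure of the graph `S = {(x, y) | y ∈ F x}`, while `R`
lies between `S` and its closure. Hence `R` is closed iff `R = closure S`, i.e. iff every
fibre `closure (F x)` of `R` equals the corresponding fibre `D(x)` of `closure S`.
-/

section

variable {X : Type u} [TopologicalSpace X] (F : X → Set X)

theorem mem_prolong_iff_mem_closure_graph {x y : X} :
    y ∈ Prolong F x ↔ (x, y) ∈ closure {p : X × X | p.2 ∈ F p.1} := by
  constructor
  · rintro ⟨ι, l, xa, ya, hl, hF, hx, hy⟩
    exact mem_closure_of_tendsto (hx.prodMk_nhds hy) (Eventually.of_forall hF)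
  · intro h
    -- the nets are indexed by the graph itself, filtered by the neighbourhoods of `(x, y)`
    have hl := mem_closure_iff_comap_neBot.mp h
    have hval : Tendsto ((↑) : {p : X × X // p.2 ∈ F p.1} → X × X)
        (comap (↑) (𝓝 (x, y))) (𝓝 (x, y)) := tendsto_comap
    exact ⟨_, _, Prod.fst ∘ Subtype.val, Prod.snd ∘ Subtype.val, hl, fun a => a.2,
      (continuous_fst.tendsto _).comp hval, (continuous_snd.tendsto _).comp hval⟩

theorem closure_fibres_subset_closure_graph :
    {p : X × X | p.2 ∈ closure (F p.1)} ⊆ closure {p : X × X | p.2 ∈ F p.1} :=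
  fun _ hp => map_mem_closure (continuous_const.prodMk continuous_id) hp fun _ hy => hy

theorem closure_subset_prolong (x : X) : closure (F x) ⊆ Prolong F x := fun _ hy =>
  (mem_prolong_iff_mem_closure_graph F).mpr (closure_fibres_subset_closure_graph F hy)

end

theorem char_zero_iff_R_closed_general {X : Type u} [TopologicalSpace X] (F : X → Set X) :
    (∀ x, closure (F x) = Prolong F x) ↔
      IsClosed {p : X × X | p.2 ∈ closure (F p.1)} := by
  set R := {p : X × X | p.2 ∈ closure (F p.1)}
  have hSR : {p : X × X | p.2 ∈ F p.1} ⊆ R := fun _ hp => subset_closure hp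
  calc (∀ x, closure (F x) = Prolong F x)
      ↔ ∀ x, Prolong F x ⊆ closure (F x) :=
        ⟨fun h x => (h x).ge, fun h x => (closure_subset_prolong F x).antisymm (h x)⟩
    _ ↔ closure {p : X × X | p.2 ∈ F p.1} ⊆ R := by
        simp only [Set.subset_def, Prod.forall, mem_prolong_iff_mem_closure_graph]; rfl
    _ ↔ IsClosed R :=
        ⟨fun h => (h.antisymm (closure_fibres_subset_closure_graph F)) ▸ isClosed_closure,
          fun h => h.closure_subset_iff.mpr hSR⟩

/-- a semi-decomposition on a topological space is of characteristic `0`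
iff it is `R`-closed, where `R = {(x,y) | y ∈ closure (F x)}`. -/
theorem char_zero_iff_R_closed {X : Type u} [TopologicalSpace X] (F : X → Set X)
    (hmem : ∀ x, x ∈ F x) (hsub : ∀ x y, x ∈ F y → F x ⊆ F y) :
    (∀ x, closure (F x) = Prolong F x) ↔
      IsClosed {p : X × X | p.2 ∈ closure (F p.1)} :=
  char_zero_iff_R_closed_general F
end

section
/- Every weakly equicontinuous semi-decomposition on a metric space is R-closed: the relation { (x,y) ∈ X × X : y ∈ closure(F(x)) } is closed. -/
/-!
Weak equicontinuity says exactly that `x ↦ closure (F x)` is uniformly continuous into the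
closed sets with the Hausdorff metric, and there membership is a closed relation because the
distance from a point to a closed set is jointly continuous.
-/

universe u

/-- Weak equicontinuity of a semi-decomposition on a metric space. -/
def WeaklyEquicontinuous {X : Type u} [MetricSpace X] (F : X → Set X) : Prop :=
  ∀ ε : ℝ, 0 < ε → ∃ δ : ℝ, 0 < δ ∧ ∀ x y : X, dist x y < δ →
    EMetric.hausdorffEdist (F x) (F y) < ENNReal.ofReal ε

open Metric TopologicalSpace

theorem TopologicalSpace.Closeds.isClosed_setOf_mem {α : Type*} [EMetricSpace α] :
    IsClosed {p : α × Closeds α | p.1 ∈ p.2} := by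
  have hzero : {p : α × Closeds α | p.1 ∈ p.2} = (fun p ↦ infEDist p.1 p.2) ⁻¹' {0} := by
    ext p
    exact mem_iff_infEDist_zero_of_closed p.2.isClosed
  rw [hzero]
  exact isClosed_singleton.preimage Closeds.continuous_infEDist

theorem Continuous.isClosed_setOf_mem_closeds {β α : Type*} [TopologicalSpace β]
    [EMetricSpace α] {G : β → Closeds α} (hG : Continuous G) :
    IsClosed {p : β × α | p.2 ∈ G p.1} :=
  Closeds.isClosed_setOf_mem.preimage (continuous_snd.prodMk (hG.comp continuous_fst))

theorem WeaklyEquicontinuous.uniformContinuous_closure {X : Type u} [MetricSpace X]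
    {F : X → Set X} (hF : WeaklyEquicontinuous F) :
    UniformContinuous fun x ↦ Closeds.closure (F x) := by
  refine Metric.uniformity_basis_dist.uniformContinuous_iff uniformity_basis_edist_nnreal
    |>.mpr fun ε hε ↦ ?_
  obtain ⟨δ, hδ, hclose⟩ := hF ε hε
  refine ⟨δ, hδ, fun x y hxy ↦ ?_⟩
  change hausdorffEDist (closure (F x)) (closure (F y)) < ε
  rw [hausdorffEDist_closure, ← ENNReal.ofReal_coe_nnreal]
  exact hclose x y hxy

theorem weaklyEquicontinuous_R_closed_general {X : Type u} [MetricSpace X] (F : X → Set X)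
    (hwe : WeaklyEquicontinuous F) :
    IsClosed {p : X × X | p.2 ∈ closure (F p.1)} :=
  hwe.uniformContinuous_closure.continuous.isClosed_setOf_mem_closeds

/-- every weakly equicontinuous semi-decomposition on a metric space
is `R`-closed: `{(x,y) | y ∈ closure (F x)}` is closed. -/
theorem weaklyEquicontinuous_R_closed {X : Type u} [MetricSpace X] (F : X → Set X)
    (hmem : ∀ x, x ∈ F x) (hsub : ∀ x y, x ∈ F y → F x ⊆ F y)
    (hwe : WeaklyEquicontinuous F) :
    IsClosed {p : X × X | p.2 ∈ closure (F p.1)} :=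
  weaklyEquicontinuous_R_closed_general F hwe
end

section
/- A semi-decomposition F on a topological space is weakly almost periodic if and only if F is pointwise almost periodic and the class decomposition {closure(F(x)) : x ∈ X} is weakly upper semi-continuous. -/
/-!
Pointwise almost periodicity makes `x ↦ closure (F x)` a partition into classes, and for a
partition `y ∈ C x ↔ x ∈ C y`. Hence the complement of the saturation `⋃ x ∈ A, C x` of a set
`A` is `{y | C y ⊆ Aᶜ}`, the largest saturated subset of `Aᶜ`. Taking `A = Uᶜ` for open `U`,
closedness of saturations gives the saturated open neighbourhood `{y | C y ⊆ U}` of every class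
inside `U`; conversely, saturated open neighbourhoods of the classes inside `Aᶜ` cover the
complement of the saturation of a closed `A`, which is therefore open.
-/

open Set

section Partition

variable {X : Type*} {C : X → Set X}

theorem mem_comm_of_partition (hself : ∀ x, x ∈ C x) (hpart : ∀ x y, y ∈ C x → C y = C x)
    {x y : X} (hy : y ∈ C x) : x ∈ C y :=
  hpart x y hy ▸ hself x

theorem compl_biUnion_eq_setOf_subset_compl (hself : ∀ x, x ∈ C x)
    (hpart : ∀ x y, y ∈ C x → C y = C x) (A : Set X) :
    (⋃ x ∈ A, C x)ᶜ = {y | C y ⊆ Aᶜ} := by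
  ext y
  simp only [compl_iUnion, mem_iInter, mem_compl_iff, mem_ofPred_eq, subset_def]
  exact ⟨fun h a ha haA => h a haA (mem_comm_of_partition hself hpart ha),
    fun h a haA hya => h a (mem_comm_of_partition hself hpart hya) haA⟩

variable [TopologicalSpace X]

theorem exists_saturated_isOpen_of_isClosed_biUnion (hself : ∀ x, x ∈ C x)
    (hpart : ∀ x y, y ∈ C x → C y = C x)
    (hclosed : ∀ A : Set X, IsClosed A → IsClosed (⋃ x ∈ A, C x))
    {x : X} {U : Set X} (hU : IsOpen U) (hxU : C x ⊆ U) :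
    ∃ V : Set X, IsOpen V ∧ C x ⊆ V ∧ V ⊆ U ∧ ∀ y ∈ V, C y ⊆ V := by
  have hV : {y | C y ⊆ U} = (⋃ a ∈ Uᶜ, C a)ᶜ := by
    rw [compl_biUnion_eq_setOf_subset_compl hself hpart, compl_compl]
  refine ⟨{y | C y ⊆ U}, hV ▸ (hclosed _ hU.isClosed_compl).isOpen_compl, ?_,
    fun y hy => hy (hself y), ?_⟩
  · exact fun z hz => (hpart x z hz).subset.trans hxU
  · exact fun y hy z hz => (hpart y z hz).subset.trans hy

theorem isClosed_biUnion_of_exists_saturated_isOpen (hself : ∀ x, x ∈ C x)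
    (hpart : ∀ x y, y ∈ C x → C y = C x)
    (hnhds : ∀ (x : X) (U : Set X), IsOpen U → C x ⊆ U →
      ∃ V : Set X, IsOpen V ∧ C x ⊆ V ∧ V ⊆ U ∧ ∀ y ∈ V, C y ⊆ V)
    {A : Set X} (hA : IsClosed A) : IsClosed (⋃ x ∈ A, C x) := by
  rw [← isOpen_compl_iff, isOpen_iff_forall_mem_open,
    compl_biUnion_eq_setOf_subset_compl hself hpart]
  intro p hp
  obtain ⟨V, hV, hpV, hVA, hVsat⟩ := hnhds p Aᶜ hA.isOpen_compl hp
  exact ⟨V, fun y hy => (hVsat y hy).trans hVA, hV, hpV (hself p)⟩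

theorem forall_isClosed_biUnion_iff_exists_saturated_isOpen (hself : ∀ x, x ∈ C x)
    (hpart : ∀ x y, y ∈ C x → C y = C x) :
    (∀ A : Set X, IsClosed A → IsClosed (⋃ x ∈ A, C x)) ↔
      ∀ (x : X) (U : Set X), IsOpen U → C x ⊆ U →
        ∃ V : Set X, IsOpen V ∧ C x ⊆ V ∧ V ⊆ U ∧ ∀ y ∈ V, C y ⊆ V :=
  ⟨fun h _ _ hU hxU => exists_saturated_isOpen_of_isClosed_biUnion hself hpart h hU hxU,
    fun h _ hA => isClosed_biUnion_of_exists_saturated_isOpen hself hpart h hA⟩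

end Partition

theorem weaklyAlmostPeriodic_iff_pap_and_wusc_general {X : Type u} [TopologicalSpace X]
    (F : X → Set X) (hmem : ∀ x, x ∈ F x) :
    ((∀ x y, y ∈ closure (F x) → closure (F y) = closure (F x)) ∧
      ∀ A : Set X, IsClosed A → IsClosed (⋃ x ∈ A, closure (F x))) ↔
    ((∀ x y, y ∈ closure (F x) → closure (F y) = closure (F x)) ∧
      ((∀ x, IsClosed (closure (F x))) ∧
        ∀ (x : X) (U : Set X), IsOpen U → closure (F x) ⊆ U →
          ∃ V : Set X, IsOpen V ∧ closure (F x) ⊆ V ∧ V ⊆ U ∧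
            ∀ y ∈ V, closure (F y) ⊆ V)) := by
  have hself : ∀ x, x ∈ closure (F x) := fun x => subset_closure (hmem x)
  constructor
  · rintro ⟨hpap, hclosed⟩
    exact ⟨hpap, fun _ => isClosed_closure,
      (forall_isClosed_biUnion_iff_exists_saturated_isOpen hself hpap).1 hclosed⟩
  · rintro ⟨hpap, -, hnhds⟩
    exact ⟨hpap, (forall_isClosed_biUnion_iff_exists_saturated_isOpen hself hpap).2 hnhds⟩

/-- a semi-decomposition `F` on a topological space is weakly almost
periodic (pointwise almost periodic, and the saturation `⋃ x ∈ A, closure (F x)` of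
every closed set `A` is closed) iff `F` is pointwise almost periodic and the class
decomposition `{closure (F x) | x ∈ X}` is weakly upper semi-continuous (every
element is closed, and every open neighborhood of an element contains a saturated
open neighborhood of it). -/
theorem weaklyAlmostPeriodic_iff_pap_and_wusc {X : Type u} [TopologicalSpace X]
    (F : X → Set X) (hmem : ∀ x, x ∈ F x) (hsub : ∀ x y, x ∈ F y → F x ⊆ F y) :
    ((∀ x y, y ∈ closure (F x) → closure (F y) = closure (F x)) ∧
      ∀ A : Set X, IsClosed A → IsClosed (⋃ x ∈ A, closure (F x))) ↔
    ((∀ x y, y ∈ closure (F x) → closure (F y) = closure (F x)) ∧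
      ((∀ x, IsClosed (closure (F x))) ∧
        ∀ (x : X) (U : Set X), IsOpen U → closure (F x) ⊆ U →
          ∃ V : Set X, IsOpen V ∧ closure (F x) ⊆ V ∧ V ⊆ U ∧
            ∀ y ∈ V, closure (F y) ⊆ V)) :=
  weaklyAlmostPeriodic_iff_pap_and_wusc_general F hmem
end

section
/- If F is a weakly almost periodic semi-decomposition on a normal topological space X, then any two distinct element closures have disjoint open saturated neighborhoods; consequently the class space X/F̂ is Hausdorff. -/
/-!
Pointwise almost periodicity makes the element closures the classes of an equivalence relation,
so distinct element closures are disjoint closed sets. Separate them by open sets `U₀`, `V₀` using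
normality and shrink each `W` to `{z | closure (F z) ⊆ W}`. This set is saturated and is the
complement of the saturation of the closed set `Wᶜ`, which weak almost periodicity makes closed.
Open saturated sets are exactly the preimages of open sets of the class space, so the separation
descends to the quotient.
-/

universe u

/-- The equivalence relation identifying points with equal element closures;
its quotient is the class space `X/F̂`. -/
def classSetoid {X : Type u} [TopologicalSpace X] (F : X → Set X) : Setoid X :=
  ⟨fun a b => closure (F a) = closure (F b),
    ⟨fun _ => rfl, Eq.symm, Eq.trans⟩⟩

open Set

section SemiDecomposition

variable {X : Type*} [TopologicalSpace X] {F : X → Set X}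

def IsSaturated (F : X → Set X) (W : Set X) : Prop :=
  ∀ z ∈ W, closure (F z) ⊆ W

def saturatedCore (F : X → Set X) (W : Set X) : Set X :=
  {z | closure (F z) ⊆ W}

theorem mem_closure_iff_closure_eq (hself : ∀ z, z ∈ closure (F z))
    (hpap : ∀ x y, y ∈ closure (F x) → closure (F y) = closure (F x)) {a z : X} :
    z ∈ closure (F a) ↔ closure (F z) = closure (F a) :=
  ⟨hpap a z, fun h => h ▸ hself z⟩

theorem mem_closure_comm (hself : ∀ z, z ∈ closure (F z))
    (hpap : ∀ x y, y ∈ closure (F x) → closure (F y) = closure (F x)) {a z : X} :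
    z ∈ closure (F a) ↔ a ∈ closure (F z) := by
  rw [mem_closure_iff_closure_eq hself hpap, mem_closure_iff_closure_eq hself hpap, eq_comm]

theorem disjoint_closure_of_closure_ne
    (hpap : ∀ x y, y ∈ closure (F x) → closure (F y) = closure (F x)) {x y : X}
    (hxy : closure (F x) ≠ closure (F y)) : Disjoint (closure (F x)) (closure (F y)) :=
  disjoint_left.2 fun z hzx hzy => hxy ((hpap x z hzx).symm.trans (hpap y z hzy))

theorem saturatedCore_subset (hself : ∀ z, z ∈ closure (F z)) (W : Set X) :
    saturatedCore F W ⊆ W :=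
  fun z hz => hz (hself z)

theorem isSaturated_saturatedCore
    (hpap : ∀ x y, y ∈ closure (F x) → closure (F y) = closure (F x)) (W : Set X) :
    IsSaturated F (saturatedCore F W) :=
  fun z hz w hw => show closure (F w) ⊆ W from hpap z w hw ▸ hz

theorem closure_subset_saturatedCore
    (hpap : ∀ x y, y ∈ closure (F x) → closure (F y) = closure (F x)) {W : Set X} {x : X}
    (hx : closure (F x) ⊆ W) : closure (F x) ⊆ saturatedCore F W :=
  fun z hz => show closure (F z) ⊆ W from hpap x z hz ▸ hx

theorem compl_biUnion_compl_eq_saturatedCore (hself : ∀ z, z ∈ closure (F z))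
    (hpap : ∀ x y, y ∈ closure (F x) → closure (F y) = closure (F x)) (W : Set X) :
    (⋃ a ∈ Wᶜ, closure (F a))ᶜ = saturatedCore F W := by
  ext z
  simp only [mem_compl_iff, mem_iUnion₂, not_exists, mem_closure_comm hself hpap (z := z)]
  exact ⟨fun h a ha => not_not.1 fun haW => h a haW ha, fun h a haW ha => haW (h ha)⟩

theorem isOpen_saturatedCore (hself : ∀ z, z ∈ closure (F z))
    (hpap : ∀ x y, y ∈ closure (F x) → closure (F y) = closure (F x))
    (hwap : ∀ A : Set X, IsClosed A → IsClosed (⋃ x ∈ A, closure (F x)))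
    {W : Set X} (hW : IsOpen W) : IsOpen (saturatedCore F W) := by
  rw [← compl_biUnion_compl_eq_saturatedCore hself hpap]
  exact (hwap _ hW.isClosed_compl).isOpen_compl

theorem exists_isOpen_isSaturated_separation [NormalSpace X] (hself : ∀ z, z ∈ closure (F z))
    (hpap : ∀ x y, y ∈ closure (F x) → closure (F y) = closure (F x))
    (hwap : ∀ A : Set X, IsClosed A → IsClosed (⋃ x ∈ A, closure (F x)))
    {x y : X} (hxy : closure (F x) ≠ closure (F y)) :
    ∃ U V : Set X, IsOpen U ∧ IsOpen V ∧ closure (F x) ⊆ U ∧ closure (F y) ⊆ V ∧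
      Disjoint U V ∧ IsSaturated F U ∧ IsSaturated F V := by
  obtain ⟨U₀, V₀, hU₀, hV₀, hxU₀, hyV₀, hU₀V₀⟩ :=
    normal_separation isClosed_closure isClosed_closure (disjoint_closure_of_closure_ne hpap hxy)
  exact ⟨saturatedCore F U₀, saturatedCore F V₀,
    isOpen_saturatedCore hself hpap hwap hU₀, isOpen_saturatedCore hself hpap hwap hV₀,
    closure_subset_saturatedCore hpap hxU₀, closure_subset_saturatedCore hpap hyV₀,
    hU₀V₀.mono (saturatedCore_subset hself U₀) (saturatedCore_subset hself V₀),
    isSaturated_saturatedCore hpap U₀, isSaturated_saturatedCore hpap V₀⟩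

theorem IsSaturated.preimage_image_mk (hself : ∀ z, z ∈ closure (F z)) {W : Set X}
    (hW : IsSaturated F W) :
    Quotient.mk (classSetoid F) ⁻¹' (Quotient.mk (classSetoid F) '' W) = W := by
  refine Subset.antisymm ?_ (subset_preimage_image _ W)
  rintro z ⟨w, hw, hwz⟩
  have hclass : closure (F w) = closure (F z) := Quotient.exact hwz
  exact hW w hw (hclass ▸ hself z)

theorem IsSaturated.isOpen_image_mk (hself : ∀ z, z ∈ closure (F z)) {W : Set X}
    (hW : IsSaturated F W) (hWo : IsOpen W) : IsOpen (Quotient.mk (classSetoid F) '' W) := by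
  rw [← isQuotientMap_quotient_mk'.isOpen_preimage]
  exact (hW.preimage_image_mk hself).symm ▸ hWo

theorem t2Space_quotient_classSetoid [NormalSpace X] (hself : ∀ z, z ∈ closure (F z))
    (hpap : ∀ x y, y ∈ closure (F x) → closure (F y) = closure (F x))
    (hwap : ∀ A : Set X, IsClosed A → IsClosed (⋃ x ∈ A, closure (F x))) :
    T2Space (Quotient (classSetoid F)) := by
  refine ⟨Quotient.ind₂ fun x y hxy => ?_⟩
  obtain ⟨U, V, hU, hV, hxU, hyV, hUV, hUsat, hVsat⟩ :=
    exists_isOpen_isSaturated_separation hself hpap hwap fun h => hxy (Quotient.sound h)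
  refine ⟨_, _, hUsat.isOpen_image_mk hself hU, hVsat.isOpen_image_mk hself hV,
    mem_image_of_mem _ (hxU (hself x)), mem_image_of_mem _ (hyV (hself y)), ?_⟩
  rwa [disjoint_image_left, hVsat.preimage_image_mk hself]

end SemiDecomposition

theorem wap_separation_and_hausdorff_class_space_general {X : Type u} [TopologicalSpace X]
    [NormalSpace X] (F : X → Set X)
    (hmem : ∀ x, x ∈ F x)
    (hpap : ∀ x y, y ∈ closure (F x) → closure (F y) = closure (F x))
    (hwap : ∀ A : Set X, IsClosed A → IsClosed (⋃ x ∈ A, closure (F x))) :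
    (∀ x y : X, closure (F x) ≠ closure (F y) →
      ∃ U V : Set X, IsOpen U ∧ IsOpen V ∧ closure (F x) ⊆ U ∧ closure (F y) ⊆ V ∧
        Disjoint U V ∧ (∀ z ∈ U, closure (F z) ⊆ U) ∧ (∀ z ∈ V, closure (F z) ⊆ V)) ∧
    T2Space (Quotient (classSetoid F)) := by
  have hself : ∀ z, z ∈ closure (F z) := fun z => subset_closure (hmem z)
  exact ⟨fun _ _ => exists_isOpen_isSaturated_separation hself hpap hwap,
    t2Space_quotient_classSetoid hself hpap hwap⟩

/-- if `F` is a weakly almost periodic semi-decomposition on a normal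
space `X`, then any two distinct element closures have disjoint open saturated
neighborhoods, and the class space `X/F̂` is Hausdorff. -/
theorem wap_separation_and_hausdorff_class_space {X : Type u} [TopologicalSpace X]
    [NormalSpace X] (F : X → Set X)
    (hmem : ∀ x, x ∈ F x) (hsub : ∀ x y, x ∈ F y → F x ⊆ F y)
    (hpap : ∀ x y, y ∈ closure (F x) → closure (F y) = closure (F x))
    (hwap : ∀ A : Set X, IsClosed A → IsClosed (⋃ x ∈ A, closure (F x))) :
    (∀ x y : X, closure (F x) ≠ closure (F y) →
      ∃ U V : Set X, IsOpen U ∧ IsOpen V ∧ closure (F x) ⊆ U ∧ closure (F y) ⊆ V ∧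
        Disjoint U V ∧ (∀ z ∈ U, closure (F z) ⊆ U) ∧ (∀ z ∈ V, closure (F z) ⊆ V)) ∧
    T2Space (Quotient (classSetoid F)) :=
  wap_separation_and_hausdorff_class_space_general F hmem hpap hwap
end

section
/- Let v : ℝ × T² → T² be the flow on the torus T² = (ℝ/ℤ)² defined by v(t,[x,y]) = [x, y + (2 + cos x)·t]. Then every orbit is periodic (each orbit is the circle {x} × (ℝ/ℤ)), the flow is R-closed, but the flow is not equicontinuous with respect to the standard metric: for every δ > 0 there exist points p, q with d(p,q) < δ and some t ∈ ℝ with d(v(t,p), v(t,q)) > 1/3. -/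
/-! The flow rotates each vertical circle `{x} × ℝ/ℤ` at the constant speed `2 + cos x ≥ 1`, so
every orbit is that circle, the orbit-closure relation is `{(p, q) | q.1 = p.1}`, and the flow is
periodic. The speeds of two nearby circles still differ, so after a long enough time two points
starting at the same height on them end up half a turn apart. -/

open scoped Real

noncomputable section

instance : Fact ((0:ℝ) < 1) := ⟨one_pos⟩

/-- The torus `T² = (ℝ/ℤ)²` with the standard (product of quotient) metric. -/
abbrev Torus : Type := AddCircle (1 : ℝ) × AddCircle (1 : ℝ)

/-- The function `cos` on `ℝ/ℤ`, i.e. `x ↦ cos (2π x)` on representatives. -/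
def circleCos (x : AddCircle (1 : ℝ)) : ℝ :=
  Real.cos (2 * π * ((AddCircle.equivIco 1 0 x : Set.Ico (0:ℝ) (0 + 1)) : ℝ))

/-- The flow `v(t,[x,y]) = [x, y + (2 + cos x) t]` on the torus. -/
def torusFlow (t : ℝ) (p : Torus) : Torus :=
  (p.1, p.2 + (((2 + circleCos p.1) * t : ℝ) : AddCircle (1 : ℝ)))

lemma circleCos_coe (x : ℝ) : circleCos (x : AddCircle (1 : ℝ)) = Real.cos (2 * π * x) := by
  rw [circleCos, AddCircle.coe_equivIco_mk_apply, div_one, mul_one, Int.fract,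
    mul_sub, mul_comm (2 * π) (⌊x⌋ : ℝ), Real.cos_sub_int_mul_two_pi]

lemma circleCos_zero : circleCos 0 = 1 := by
  simpa using circleCos_coe 0

lemma two_add_circleCos_pos (a : AddCircle (1 : ℝ)) : 0 < 2 + circleCos a := by
  have := Real.neg_one_le_cos (2 * π * (AddCircle.equivIco 1 0 a : ℝ))
  rw [circleCos]
  linarith

lemma torusFlow_fst (t : ℝ) (p : Torus) : (torusFlow t p).1 = p.1 := rfl

lemma range_torusFlow (p : Torus) :
    Set.range (torusFlow · p) = {q : Torus | q.1 = p.1} := by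
  refine Set.Subset.antisymm (Set.range_subset_iff.2 fun t => torusFlow_fst t p) ?_
  rintro q (hq : q.1 = p.1)
  obtain ⟨r, hr⟩ := QuotientAddGroup.mk_surjective (q.2 - p.2)
  refine ⟨r / (2 + circleCos p.1), Prod.ext hq.symm ?_⟩
  change p.2 + (((2 + circleCos p.1) * (r / (2 + circleCos p.1)) : ℝ) : AddCircle (1 : ℝ)) = q.2
  rw [mul_div_cancel₀ r (two_add_circleCos_pos p.1).ne', hr, add_sub_cancel]

lemma torusFlow_one_div_two_add_circleCos (p : Torus) : torusFlow (1 / (2 + circleCos p.1)) p = p := by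
  refine Prod.ext rfl ?_
  change p.2 + (((2 + circleCos p.1) * (1 / (2 + circleCos p.1)) : ℝ) : AddCircle (1 : ℝ)) = p.2
  rw [mul_one_div_cancel (two_add_circleCos_pos p.1).ne', AddCircle.coe_period, add_zero]

lemma closure_range_torusFlow (p : Torus) :
    closure (Set.range (torusFlow · p)) = {q : Torus | q.1 = p.1} := by
  rw [range_torusFlow]
  exact (isClosed_eq continuous_fst continuous_const).closure_eq

lemma isClosed_orbitClosureRel :
    IsClosed {pq : Torus × Torus | pq.2 ∈ closure (Set.range (torusFlow · pq.1))} := by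
  simp only [closure_range_torusFlow, Set.mem_ofPred_eq]
  exact isClosed_eq (continuous_fst.comp continuous_snd) (continuous_fst.comp continuous_fst)

lemma dist_snd_torusFlow (t : ℝ) (a b y : AddCircle (1 : ℝ)) :
    dist (torusFlow t (a, y)).2 (torusFlow t (b, y)).2 =
      ‖(((circleCos a - circleCos b) * t : ℝ) : AddCircle (1 : ℝ))‖ := by
  rw [dist_eq_norm]
  change ‖(y + (((2 + circleCos a) * t : ℝ) : AddCircle (1 : ℝ))) -
    (y + (((2 + circleCos b) * t : ℝ) : AddCircle (1 : ℝ)))‖ = _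
  rw [add_sub_add_left_eq_sub, ← AddCircle.coe_sub]
  congr 2
  ring

lemma exists_half_dist_torusFlow {a b : AddCircle (1 : ℝ)} (h : circleCos a ≠ circleCos b)
    (y : AddCircle (1 : ℝ)) : ∃ t : ℝ, 1 / 2 ≤ dist (torusFlow t (a, y)) (torusFlow t (b, y)) := by
  refine ⟨1 / 2 / (circleCos a - circleCos b), le_of_eq_of_le ?_ (le_max_right _ _)⟩
  rw [dist_snd_torusFlow, mul_div_cancel₀ _ (sub_ne_zero.2 h)]
  simpa using (AddCircle.norm_half_period_eq (1 : ℝ)).symm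

lemma exists_dist_zero_lt_circleCos_ne {δ : ℝ} (hδ : 0 < δ) :
    ∃ x : AddCircle (1 : ℝ), dist 0 x < δ ∧ circleCos x ≠ circleCos 0 := by
  set x : ℝ := min (δ / 2) (1 / 2)
  have hx : 0 < x := lt_min (half_pos hδ) one_half_pos
  refine ⟨x, ?_, ?_⟩
  · calc dist 0 (x : AddCircle (1 : ℝ)) = ‖(x : AddCircle (1 : ℝ))‖ := by
          rw [dist_comm, dist_zero_right]
      _ ≤ ‖x‖ := QuotientAddGroup.norm_mk_le_norm
      _ = x := Real.norm_of_nonneg hx.le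
      _ < δ := (min_le_left _ _).trans_lt (half_lt_self hδ)
  · have h2πx : 0 < 2 * π * x := by positivity
    have h2πx_lt : 2 * π * x < 2 * π := by nlinarith [min_le_right (δ / 2) (1 / 2 : ℝ), Real.pi_pos]
    rw [circleCos_coe, circleCos_zero, Ne, Real.cos_eq_one_iff_of_lt_of_lt (by linarith) h2πx_lt]
    exact h2πx.ne'

/-- for the flow `v(t,[x,y]) = [x, y + (2 + cos x) t]` on the torus:
every orbit is periodic and equals the circle `{x} × (ℝ/ℤ)`; the flow is `R`-closed;
but it is not equicontinuous for the standard metric: for every `δ > 0` there are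
points `p, q` with `dist p q < δ` and a time `t` with `dist (v t p) (v t q) > 1/3`. -/
theorem torusFlow_properties :
    (∀ p : Torus, (∃ t : ℝ, 0 < t ∧ torusFlow t p = p) ∧
      {q : Torus | ∃ t : ℝ, torusFlow t p = q} = {q : Torus | q.1 = p.1}) ∧
    IsClosed {pq : Torus × Torus |
      pq.2 ∈ closure {q : Torus | ∃ t : ℝ, torusFlow t pq.1 = q}} ∧
    (∀ δ : ℝ, 0 < δ → ∃ (p q : Torus) (t : ℝ),
      dist p q < δ ∧ (1 : ℝ) / 3 < dist (torusFlow t p) (torusFlow t q)) := by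
  refine ⟨fun p => ⟨⟨_, one_div_pos.2 (two_add_circleCos_pos p.1), torusFlow_one_div_two_add_circleCos p⟩,
    range_torusFlow p⟩, isClosed_orbitClosureRel, fun δ hδ => ?_⟩
  obtain ⟨x, hxδ, hx⟩ := exists_dist_zero_lt_circleCos_ne hδ
  obtain ⟨t, ht⟩ := exists_half_dist_torusFlow hx.symm 0
  refine ⟨(0, 0), (x, 0), t, ?_, by linarith⟩
  rwa [Prod.dist_eq, dist_self, max_eq_left dist_nonneg]
end
end
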